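/- arXiv:1804.03604 — 4 statements merged into one kernel-verified Lean document; each statement's English description precedes it below -/
import Mathlib

section
/- (Decomposition of bad matchings.) If a string F of length n has a k-bad self-matching (a collection of k matched index pairs with i_1 <= ... <= i_k), then for any integer k' with 1 <= k' <= k/2, F also has a k'-bad self-matching whose total span (i_{k'} - i_1) + (i'_{k'} - i'_1) is at most (4k'/k) * n. -/
private lemma stmt6_aux (k k' : ℕ) (hk' : 1 ≤ k') (f : ℕ → ℕ)
    (hmono : ∀ a b, a ≤ b → b < k → f a ≤ f b) :
    ∀ M, M * k' ≤ k →
      ∑ t ∈ Finset.range M, (f (t * k' + k' - 1) - f (t * k')) ≤ f (M * k' - 1) - f 0 := by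
  intro M
  induction M with
  | zero => simp
  | succ M ih =>
    intro hM
    rw [Finset.sum_range_succ]
    have hM' : M * k' ≤ k := le_trans (by nlinarith) hM
    have h1 := ih hM'
    have hb_le_a : f (M * k') ≤ f (M * k' + k' - 1) := by
      apply hmono _ _ (by omega)
      have : (M + 1) * k' = M * k' + k' := by ring
      omega
    have hc_le_b : f (M * k' - 1) ≤ f (M * k') := by
      apply hmono _ _ (by omega)
      have : (M + 1) * k' = M * k' + k' := by ring
      omega
    have hd_le_c : f 0 ≤ f (M * k' - 1) := by
      apply hmono _ _ (by omega)
      have : (M + 1) * k' = M * k' + k' := by ring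
      omega
    have heq : (M + 1) * k' - 1 = M * k' + k' - 1 := by
      have : (M + 1) * k' = M * k' + k' := by ring
      omega
    rw [heq]
    omega

/-- Decomposition of bad matchings.  A `k`-bad self-matching of a string of length `n`
is given by monotone index sequences `i, i'` with values in `[1,n]` such that every
matched pair `j < k` is "bad" (predicate `B j`: the matched substrings are non-identical
but have colliding hashes).  Then for any `1 ≤ k' ≤ k/2` there is a consecutive group of
`k'` matched pairs — itself a `k'`-bad self-matching — whose total span satisfies
`(i_{s+k'-1} - i_s) + (i'_{s+k'-1} - i'_s) ≤ (4k'/k)·n`. -/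
theorem stmt6 (n k k' : ℕ) (hk' : 1 ≤ k') (hk : 2 * k' ≤ k)
    (i i' : ℕ → ℕ) (B : ℕ → Prop)
    (hmono : ∀ a b, a ≤ b → b < k → i a ≤ i b)
    (hmono' : ∀ a b, a ≤ b → b < k → i' a ≤ i' b)
    (hrange : ∀ j < k, 1 ≤ i j ∧ i j ≤ n ∧ 1 ≤ i' j ∧ i' j ≤ n)
    (hbad : ∀ j < k, B j) :
    ∃ s : ℕ, s + k' ≤ k ∧
      (∀ j, s ≤ j → j < s + k' → B j) ∧
      ((i (s + k' - 1) - i s) + (i' (s + k' - 1) - i' s)) * k ≤ 4 * k' * n := by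
  set m := k / k' with hm
  have hmk' : m * k' ≤ k := Nat.div_mul_le_self k k'
  have hm2 : 2 ≤ m := by
    rw [hm]
    exact (Nat.le_div_iff_mul_le hk').mpr (by omega)
  have hk_le : k ≤ 2 * m * k' := by
    have h := Nat.div_add_mod k k'
    rw [← hm] at h
    have hmod : k % k' < k' := Nat.mod_lt _ hk'
    have hk'm : k' ≤ m * k' := Nat.le_mul_of_pos_left _ (by omega)
    nlinarith
  set span : ℕ → ℕ := fun t =>
    (i (t * k' + k' - 1) - i (t * k')) + (i' (t * k' + k' - 1) - i' (t * k')) with hspan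
  have hsum : ∑ t ∈ Finset.range m, span t ≤ 2 * n := by
    rw [hspan]
    simp only
    rw [Finset.sum_add_distrib]
    have h1 := stmt6_aux k k' hk' i hmono m hmk'
    have h2 := stmt6_aux k k' hk' i' hmono' m hmk'
    have hi : i (m * k' - 1) ≤ n := by
      exact (hrange _ (by omega)).2.1
    have hi' : i' (m * k' - 1) ≤ n := by
      exact (hrange _ (by omega)).2.2.2
    omega
  -- pigeonhole: some group has small span
  have hex : ∃ t < m, span t * m ≤ 2 * n := by
    by_contra h
    push_neg at h
    have : ∀ t ∈ Finset.range m, 2 * n + 1 ≤ span t * m := by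
      intro t ht
      have := h t (Finset.mem_range.mp ht)
      omega
    have hle : m * (2 * n + 1) ≤ ∑ t ∈ Finset.range m, span t * m := by
      calc m * (2 * n + 1) = ∑ _t ∈ Finset.range m, (2 * n + 1) := by
            rw [Finset.sum_const, Finset.card_range, smul_eq_mul]
          _ ≤ _ := Finset.sum_le_sum this
    rw [← Finset.sum_mul] at hle
    have : (∑ t ∈ Finset.range m, span t) * m ≤ 2 * n * m :=
      Nat.mul_le_mul_right m hsum
    nlinarith [hm2]
  obtain ⟨t, htm, hts⟩ := hex
  refine ⟨t * k', ?_, ?_, ?_⟩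
  · have : (t + 1) * k' ≤ m * k' := Nat.mul_le_mul_right k' (by omega)
    nlinarith
  · intro j hj1 hj2
    apply hbad
    have : (t + 1) * k' ≤ m * k' := Nat.mul_le_mul_right k' (by omega)
    nlinarith
  · calc ((i (t * k' + k' - 1) - i (t * k')) + (i' (t * k' + k' - 1) - i' (t * k'))) * k
        = span t * k := by rw [hspan]
      _ ≤ span t * (2 * m * k') := Nat.mul_le_mul_left _ hk_le
      _ = 2 * k' * (span t * m) := by ring
      _ ≤ 2 * k' * (2 * n) := Nat.mul_le_mul_left _ hts
      _ = 4 * k' * n := by ring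
end

section
/- (Number of t-witnesses.) For any positive integer t, the number of t-witnesses is at most 2^{Ct} for some absolute constant C. Specifically: a t-witness consists of a sequence of nonnegative integers b_0,...,b_{t-1} with sum_i i*b_i <= t, together with, for each i, a subset B_i of {1,...,t*2^i} of size at most floor(t*2^{-i}) + b_i; the total number of such objects is at most exp(O(t)). -/
open Finset Nat

lemma sum_div_two_pow_le (N : ℕ) : ∀ m : ℕ, ∑ i ∈ Finset.range m, N / 2 ^ i ≤ 2 * N := by
  induction N using Nat.strong_induction_on with
  | _ N ih =>
    intro m
    match m with
    | 0 => simp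
    | m + 1 =>
      rcases Nat.eq_zero_or_pos N with rfl | hN
      · simp
      rw [Finset.sum_range_succ']
      have h1 : ∀ i : ℕ, N / 2 ^ (i + 1) = (N / 2) / 2 ^ i := by
        intro i
        rw [Nat.div_div_eq_div_mul, pow_succ']
      simp only [h1, pow_zero, Nat.div_one]
      have h2 := ih (N / 2) (Nat.div_lt_self hN one_lt_two) m
      omega

lemma sum_weighted_div_le (t : ℕ) : ∀ m : ℕ, ∑ i ∈ Finset.range m, (i + 2) * (t / 2 ^ i) ≤ 6 * t := by
  induction t using Nat.strong_induction_on with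
  | _ t ih =>
    intro m
    match m with
    | 0 => simp
    | m + 1 =>
      rcases Nat.eq_zero_or_pos t with rfl | ht
      · simp
      rw [Finset.sum_range_succ']
      have h1 : ∀ i : ℕ, t / 2 ^ (i + 1) = (t / 2) / 2 ^ i := by
        intro i
        rw [Nat.div_div_eq_div_mul, pow_succ']
      have h2 : ∀ i ∈ Finset.range m, (i + 1 + 2) * (t / 2 ^ (i + 1))
          = (i + 2) * ((t / 2) / 2 ^ i) + (t / 2) / 2 ^ i := by
        intro i _
        rw [h1]; ring
      rw [Finset.sum_congr rfl h2, Finset.sum_add_distrib]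
      have h3 := ih (t / 2) (Nat.div_lt_self ht one_lt_two) m
      have h4 := sum_div_two_pow_le (t / 2) m
      simp only [pow_zero, Nat.div_one]
      omega

lemma succ_pow_le_three_mul (k : ℕ) : (k + 1) ^ k ≤ 3 * k ^ k := by
  rcases Nat.eq_zero_or_pos k with rfl | hk
  · simp
  have hk' : (0:ℝ) < k := by exact_mod_cast hk
  have h1 : ((k:ℝ) + 1) ≤ k * Real.exp (1 / k) := by
    have := Real.add_one_le_exp (1 / (k:ℝ))
    calc ((k:ℝ) + 1) = k * (1 / k + 1) := by field_simp; ring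
    _ ≤ k * Real.exp (1 / k) := by
        exact mul_le_mul_of_nonneg_left this hk'.le
  have h2 : ((k:ℝ) + 1) ^ k ≤ (k:ℝ) ^ k * Real.exp 1 := by
    calc ((k:ℝ) + 1) ^ k ≤ ((k:ℝ) * Real.exp (1 / k)) ^ k := by
          apply pow_le_pow_left₀ (by positivity) h1
    _ = (k:ℝ) ^ k * Real.exp (1 / k) ^ k := mul_pow _ _ _
    _ = (k:ℝ) ^ k * Real.exp 1 := by
          rw [← Real.exp_nat_mul]
          congr 1
          field_simp
  have h3 : ((k:ℝ) + 1) ^ k ≤ 3 * (k:ℝ) ^ k := by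
    calc ((k:ℝ) + 1) ^ k ≤ (k:ℝ) ^ k * Real.exp 1 := h2
    _ ≤ (k:ℝ) ^ k * 3 := by
        apply mul_le_mul_of_nonneg_left _ (by positivity)
        exact (Real.exp_one_lt_d9.trans (by norm_num)).le
    _ = 3 * (k:ℝ) ^ k := by ring
  exact_mod_cast (by push_cast; exact h3 : (((k:ℕ) + 1 : ℕ) ^ k : ℝ) ≤ ((3 * k ^ k : ℕ) : ℝ))

lemma pow_self_le_three_pow_mul_factorial (k : ℕ) : k ^ k ≤ 3 ^ k * k.factorial := by
  induction k with
  | zero => simp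
  | succ k ih =>
    calc (k+1) ^ (k+1) = (k+1) * (k+1) ^ k := by ring
    _ ≤ (k+1) * (3 * k ^ k) := Nat.mul_le_mul_left _ (succ_pow_le_three_mul k)
    _ ≤ (k+1) * (3 * (3 ^ k * k.factorial)) := by
        exact Nat.mul_le_mul_left _ (Nat.mul_le_mul_left _ ih)
    _ = 3 ^ (k+1) * (k+1).factorial := by
        rw [Nat.factorial_succ]; ring

lemma choose_mul_pow_le (m k : ℕ) : m.choose k * k ^ k ≤ 3 ^ k * m ^ k := by
  calc m.choose k * k ^ k ≤ m.choose k * (3 ^ k * k.factorial) :=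
        Nat.mul_le_mul_left _ (pow_self_le_three_pow_mul_factorial k)
  _ = 3 ^ k * (k.factorial * m.choose k) := by ring
  _ = 3 ^ k * m.descFactorial k := by rw [Nat.descFactorial_eq_factorial_mul_choose]
  _ ≤ 3 ^ k * m ^ k := Nat.mul_le_mul_left _ (Nat.descFactorial_le_pow m k)

lemma sum_choose_le (n k : ℕ) : ∑ j ∈ Finset.range (k+1), n.choose j ≤ (n + k).choose k := by
  induction k with
  | zero => simp
  | succ k ih =>
    rw [Finset.sum_range_succ]
    have h1 : (n + (k+1)).choose (k+1) = (n + k).choose k + (n + k).choose (k+1) := by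
      have : n + (k + 1) = (n + k) + 1 := by ring
      rw [this, Nat.choose_succ_succ]
    have h2 : n.choose (k+1) ≤ (n + k).choose (k+1) :=
      Nat.choose_le_choose _ (Nat.le_add_right n k)
    omega

lemma card_finset_card_le (n k : ℕ) :
    Fintype.card {s : Finset (Fin n) // s.card ≤ k} ≤ (n + k).choose k := by
  classical
  rw [Fintype.card_subtype]
  have hsub : (Finset.univ.filter fun s : Finset (Fin n) => s.card ≤ k) ⊆
      (Finset.range (k+1)).biUnion (fun j => Finset.powersetCard j Finset.univ) := by
    intro s hs
    simp only [Finset.mem_filter, Finset.mem_univ, true_and] at hs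
    simp only [Finset.mem_biUnion, Finset.mem_range, Finset.mem_powersetCard]
    exact ⟨s.card, Nat.lt_succ_of_le hs, s.subset_univ, rfl⟩
  calc (Finset.univ.filter fun s : Finset (Fin n) => s.card ≤ k).card
      ≤ ((Finset.range (k+1)).biUnion (fun j => Finset.powersetCard j Finset.univ)).card :=
        Finset.card_le_card hsub
    _ ≤ ∑ j ∈ Finset.range (k+1), (Finset.powersetCard j (Finset.univ : Finset (Fin n))).card :=
        Finset.card_biUnion_le
    _ = ∑ j ∈ Finset.range (k+1), n.choose j := by
        apply Finset.sum_congr rfl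
        intro j _
        rw [Finset.card_powersetCard, Finset.card_univ, Fintype.card_fin]
    _ ≤ (n + k).choose k := sum_choose_le n k

-- n + k ≤ k * 4^(i+1) whenever t/2^i ≤ k, 1 ≤ k, n = t*2^i
lemma mul_pow_add_le (t i k : ℕ) (hq : t / 2 ^ i ≤ k) (hk : 1 ≤ k) :
    t * 2 ^ i + k ≤ k * 4 ^ (i + 1) := by
  have h1 : t < (t / 2 ^ i + 1) * 2 ^ i := by
    have hp : 0 < 2 ^ i := pow_pos (by norm_num) i
    have := Nat.div_add_mod t (2 ^ i)
    have := Nat.mod_lt t hp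
    nlinarith
  have h2 : t ≤ 2 * k * 2 ^ i := by
    have : t / 2 ^ i + 1 ≤ 2 * k := by omega
    calc t ≤ (t / 2 ^ i + 1) * 2 ^ i := h1.le
    _ ≤ 2 * k * 2 ^ i := Nat.mul_le_mul_right _ this
  have h4 : (4:ℕ) ^ i = 2 ^ i * 2 ^ i := by
    rw [← pow_add]
    rw [show (4:ℕ) = 2 ^ 2 by norm_num, ← pow_mul]
    congr 1
    omega
  calc t * 2 ^ i + k ≤ 2 * k * 2 ^ i * 2 ^ i + k := by
        exact Nat.add_le_add_right (Nat.mul_le_mul_right _ h2) k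
  _ ≤ 2 * k * 4 ^ i + k * 4 ^ i := by
      rw [h4]
      have h5 : k ≤ k * (2 ^ i * 2 ^ i) := Nat.le_mul_of_pos_right _ (by positivity)
      nlinarith [pow_pos (show (0:ℕ) < 2 by norm_num) i]
  _ ≤ k * 4 ^ (i + 1) := by
      rw [pow_succ]
      ring_nf
      omega

lemma card_small_subsets (t i b : ℕ) :
    Fintype.card {s : Finset (Fin (t * 2 ^ i)) // s.card ≤ t / 2 ^ i + b}
      ≤ 2 ^ ((2 * i + 4) * (t / 2 ^ i + b)) := by
  classical
  set k := t / 2 ^ i + b with hkdef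
  rcases Nat.eq_zero_or_pos k with hk0 | hk
  · rw [hk0]
    have h := card_finset_card_le (t * 2 ^ i) 0
    simpa using h
  have h1 : Fintype.card {s : Finset (Fin (t * 2 ^ i)) // s.card ≤ k} ≤ (t * 2 ^ i + k).choose k :=
    card_finset_card_le _ _
  have h2 : (t * 2 ^ i + k).choose k ≤ 2 ^ ((2 * i + 4) * k) := by
    have h3 : (t * 2 ^ i + k).choose k * k ^ k ≤ 3 ^ k * (k * 4 ^ (i + 1)) ^ k := by
      calc (t * 2 ^ i + k).choose k * k ^ k ≤ 3 ^ k * (t * 2 ^ i + k) ^ k := choose_mul_pow_le _ _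
      _ ≤ 3 ^ k * (k * 4 ^ (i + 1)) ^ k := by
          apply Nat.mul_le_mul_left
          exact Nat.pow_le_pow_left (mul_pow_add_le t i k (by omega) hk) k
    have h4 : 3 ^ k * (k * 4 ^ (i + 1)) ^ k = (3 ^ k * 4 ^ ((i + 1) * k)) * k ^ k := by
      rw [mul_pow, ← pow_mul]
      ring
    rw [h4] at h3
    have h5 : (t * 2 ^ i + k).choose k ≤ 3 ^ k * 4 ^ ((i + 1) * k) :=
      Nat.le_of_mul_le_mul_right h3 (pow_pos hk k)
    calc (t * 2 ^ i + k).choose k ≤ 3 ^ k * 4 ^ ((i + 1) * k) := h5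
    _ ≤ 4 ^ k * 4 ^ ((i + 1) * k) := by
        exact Nat.mul_le_mul_right _ (Nat.pow_le_pow_left (by norm_num) k)
    _ = 4 ^ (k + (i + 1) * k) := by rw [← pow_add]
    _ = 2 ^ ((2 * i + 4) * k) := by
        rw [show (4:ℕ) = 2 ^ 2 by norm_num, ← pow_mul]
        congr 1
        ring
  exact h1.trans h2

lemma prod_max_eq (t : ℕ) (ht : 1 ≤ t) :
    ∏ i ∈ Finset.range t, max i 1 = (t - 1).factorial := by
  induction t with
  | zero => omega
  | succ t ih =>
    rcases Nat.eq_zero_or_pos t with rfl | ht'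
    · simp
    rw [Finset.prod_range_succ, ih ht']
    have h1 : max t 1 = t := by omega
    rw [h1]
    have h2 : t - 1 + 1 = t := by omega
    rw [show t + 1 - 1 = t by omega, ← h2, Nat.factorial_succ, h2]
    ring

lemma prod_div_max_le (t : ℕ) (ht : 1 ≤ t) :
    ∏ i ∈ Finset.range t, (t / max i 1 + 1) ≤ 2 ^ (4 * t) := by
  have key : (∏ i ∈ Finset.range t, (t / max i 1 + 1)) * (t - 1).factorial ≤ (2 * t) ^ t := by
    rw [← prod_max_eq t ht, ← Finset.prod_mul_distrib]
    calc ∏ i ∈ Finset.range t, (t / max i 1 + 1) * max i 1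
        ≤ ∏ i ∈ Finset.range t, (2 * t) := by
          apply Finset.prod_le_prod'
          intro i hi
          simp only [Finset.mem_range] at hi
          have h1 : t / max i 1 * max i 1 ≤ t := Nat.div_mul_le_self t _
          have h2 : max i 1 ≤ t := by omega
          calc (t / max i 1 + 1) * max i 1 = t / max i 1 * max i 1 + max i 1 := by ring
          _ ≤ 2 * t := by omega
      _ = (2 * t) ^ t := by rw [Finset.prod_const, Finset.card_range]
  have h6 : (2 * t) ^ t = 2 ^ t * t ^ t := mul_pow 2 t t
  have h7 : t ^ t ≤ 3 ^ t * t.factorial := pow_self_le_three_pow_mul_factorial t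
  have h8 : t.factorial = t * (t - 1).factorial := by
    conv_lhs => rw [show t = t - 1 + 1 by omega]
    rw [Nat.factorial_succ, show t - 1 + 1 = t by omega]
  have h9 : (∏ i ∈ Finset.range t, (t / max i 1 + 1)) * (t - 1).factorial
      ≤ (2 ^ t * 3 ^ t * t) * (t - 1).factorial := by
    calc (∏ i ∈ Finset.range t, (t / max i 1 + 1)) * (t - 1).factorial ≤ (2 * t) ^ t := key
    _ = 2 ^ t * t ^ t := h6
    _ ≤ 2 ^ t * (3 ^ t * t.factorial) := Nat.mul_le_mul_left _ h7
    _ = (2 ^ t * 3 ^ t * t) * (t - 1).factorial := by rw [h8]; ring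
  have h10 : ∏ i ∈ Finset.range t, (t / max i 1 + 1) ≤ 2 ^ t * 3 ^ t * t :=
    Nat.le_of_mul_le_mul_right h9 (Nat.factorial_pos _)
  calc ∏ i ∈ Finset.range t, (t / max i 1 + 1) ≤ 2 ^ t * 3 ^ t * t := h10
  _ ≤ 2 ^ t * 2 ^ (2 * t) * 2 ^ t := by
      apply Nat.mul_le_mul
      apply Nat.mul_le_mul_left
      · calc (3:ℕ) ^ t ≤ 4 ^ t := Nat.pow_le_pow_left (by norm_num) t
          _ = 2 ^ (2 * t) := by rw [show (4:ℕ) = 2 ^ 2 by norm_num, ← pow_mul]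
      · exact (Nat.lt_two_pow_self (n := t)).le
  _ = 2 ^ (4 * t) := by rw [← pow_add, ← pow_add]; congr 1; ring

lemma exponent_bound (t : ℕ) (ht : 1 ≤ t) (b : Fin t → Fin (t + 1))
    (hb : (∑ i : Fin t, (i : ℕ) * (b i : ℕ)) ≤ t) :
    ∑ i : Fin t, (2 * (i : ℕ) + 4) * (t / 2 ^ (i : ℕ) + (b i : ℕ)) ≤ 22 * t := by
  haveI : NeZero t := ⟨by omega⟩
  have hsplit : ∑ i : Fin t, (2 * (i : ℕ) + 4) * (t / 2 ^ (i : ℕ) + (b i : ℕ))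
      = (∑ i : Fin t, (2 * (i : ℕ) + 4) * (t / 2 ^ (i : ℕ)))
        + ∑ i : Fin t, (2 * (i : ℕ) + 4) * (b i : ℕ) := by
    rw [← Finset.sum_add_distrib]
    apply Finset.sum_congr rfl
    intro i _
    ring
  have hA : (∑ i : Fin t, (2 * (i : ℕ) + 4) * (t / 2 ^ (i : ℕ))) ≤ 12 * t := by
    have h1 : (∑ i : Fin t, (2 * (i : ℕ) + 4) * (t / 2 ^ (i : ℕ)))
        = 2 * ∑ i ∈ Finset.range t, (i + 2) * (t / 2 ^ i) := by
      rw [Finset.mul_sum, ← Fin.sum_univ_eq_sum_range (fun i => 2 * ((i + 2) * (t / 2 ^ i))) t]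
      apply Finset.sum_congr rfl
      intro i _
      ring
    rw [h1]
    have := sum_weighted_div_le t t
    omega
  have hsumb : (∑ i : Fin t, (b i : ℕ)) ≤ 2 * t := by
    have h2 : (∑ i : Fin t, (b i : ℕ))
        ≤ ∑ i : Fin t, ((if i = 0 then t else 0) + (i : ℕ) * (b i : ℕ)) := by
      apply Finset.sum_le_sum
      intro i _
      by_cases hi : i = 0
      · subst hi
        have := (b 0).isLt
        simp
        omega
      · simp only [if_neg hi, Nat.zero_add]
        have hi' : 1 ≤ (i : ℕ) := by
          rcases Nat.eq_zero_or_pos (i : ℕ) with h | h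
          · exact absurd (Fin.ext h) hi
          · exact h
        calc (b i : ℕ) = 1 * (b i : ℕ) := (one_mul _).symm
        _ ≤ (i : ℕ) * (b i : ℕ) := Nat.mul_le_mul_right _ hi'
    have h3 : (∑ i : Fin t, ((if i = 0 then t else 0) + (i : ℕ) * (b i : ℕ)))
        = (∑ i : Fin t, (if i = 0 then t else 0)) + ∑ i : Fin t, (i : ℕ) * (b i : ℕ) :=
      Finset.sum_add_distrib
    have h4 : (∑ i : Fin t, (if i = (0 : Fin t) then t else 0)) = t := by
      rw [Finset.sum_ite_eq' Finset.univ (0 : Fin t) (fun _ => t)]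
      simp
    omega
  have hB : (∑ i : Fin t, (2 * (i : ℕ) + 4) * (b i : ℕ)) ≤ 10 * t := by
    have h5 : (∑ i : Fin t, (2 * (i : ℕ) + 4) * (b i : ℕ))
        = 2 * (∑ i : Fin t, (i : ℕ) * (b i : ℕ)) + 4 * ∑ i : Fin t, (b i : ℕ) := by
      rw [Finset.mul_sum, Finset.mul_sum, ← Finset.sum_add_distrib]
      apply Finset.sum_congr rfl
      intro i _
      ring
    rw [h5]
    omega
  omega

lemma card_B_le (t : ℕ) (ht : 1 ≤ t) :
    Fintype.card {b : Fin t → Fin (t + 1) // (∑ i : Fin t, (i : ℕ) * (b i : ℕ)) ≤ t}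
      ≤ 2 ^ (4 * t) := by
  classical
  have key : ∀ (b : {b : Fin t → Fin (t + 1) // (∑ i : Fin t, (i : ℕ) * (b i : ℕ)) ≤ t})
      (i : Fin t), (b.1 i : ℕ) < t / max (i : ℕ) 1 + 1 := by
    rintro ⟨b, hb⟩ i
    have hpos : 0 < max (i : ℕ) 1 := by omega
    rw [Nat.lt_succ_iff, Nat.le_div_iff_mul_le hpos]
    rcases Nat.eq_zero_or_pos (i : ℕ) with h0 | h1
    · rw [h0]
      have := (b i).isLt
      simp only [Nat.max_eq_right (by omega : (0:ℕ) ≤ 1)]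
      omega
    · rw [Nat.max_eq_left h1]
      have hle : (i : ℕ) * (b i : ℕ) ≤ ∑ j : Fin t, (j : ℕ) * (b j : ℕ) :=
        Finset.single_le_sum (f := fun j : Fin t => (j : ℕ) * (b j : ℕ))
          (fun j _ => Nat.zero_le _) (Finset.mem_univ i)
      calc (b i : ℕ) * (i : ℕ) = (i : ℕ) * (b i : ℕ) := Nat.mul_comm _ _
      _ ≤ t := hle.trans hb
  let g : {b : Fin t → Fin (t + 1) // (∑ i : Fin t, (i : ℕ) * (b i : ℕ)) ≤ t}
      → ∀ i : Fin t, Fin (t / max (i : ℕ) 1 + 1) :=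
    fun b => fun i => ⟨(b.1 i : ℕ), key b i⟩
  have hg : Function.Injective g := by
    rintro ⟨b1, h1⟩ ⟨b2, h2⟩ h
    apply Subtype.ext
    funext i
    have := congrFun h i
    simp only [g, Fin.mk.injEq] at this
    exact Fin.ext this
  calc Fintype.card {b : Fin t → Fin (t + 1) // (∑ i : Fin t, (i : ℕ) * (b i : ℕ)) ≤ t}
      ≤ Fintype.card (∀ i : Fin t, Fin (t / max (i : ℕ) 1 + 1)) :=
        Fintype.card_le_of_injective g hg
  _ = ∏ i : Fin t, (t / max (i : ℕ) 1 + 1) := by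
      rw [Fintype.card_pi]
      apply Finset.prod_congr rfl
      intro i _
      rw [Fintype.card_fin]
  _ = ∏ i ∈ Finset.range t, (t / max i 1 + 1) :=
      Fin.prod_univ_eq_prod_range (fun i => t / max i 1 + 1) t
  _ ≤ 2 ^ (4 * t) := prod_div_max_le t ht

/-- Number of `t`-witnesses.  A `t`-witness consists of nonnegative integers
`b_0, …, b_{t-1}` (each at most `t`) with `∑ i, i·b_i ≤ t`, together with, for each
level `i`, a subset `B_i ⊆ {1, …, t·2^i}` of size at most `⌊t·2^{-i}⌋ + b_i`.
For every positive integer `t` the number of `t`-witnesses is at most `2^{C·t}`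
for some absolute constant `C`. -/
theorem stmt9 :
    ∃ C : ℕ, ∀ t : ℕ, 1 ≤ t →
      Fintype.card
          {w : (Fin t → Fin (t + 1)) × ((i : Fin t) → Finset (Fin (t * 2 ^ (i : ℕ)))) //
            (∑ i : Fin t, (i : ℕ) * (w.1 i : ℕ)) ≤ t ∧
            ∀ i : Fin t, (w.2 i).card ≤ t / 2 ^ (i : ℕ) + (w.1 i : ℕ)}
        ≤ 2 ^ (C * t) := by
  classical
  refine ⟨26, fun t ht => ?_⟩
  let B := {b : Fin t → Fin (t + 1) // (∑ i : Fin t, (i : ℕ) * (b i : ℕ)) ≤ t}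
  let Fib : B → Type := fun b =>
    ∀ i : Fin t, {s : Finset (Fin (t * 2 ^ (i : ℕ))) // s.card ≤ t / 2 ^ (i : ℕ) + (b.1 i : ℕ)}
  let f : {w : (Fin t → Fin (t + 1)) × ((i : Fin t) → Finset (Fin (t * 2 ^ (i : ℕ)))) //
            (∑ i : Fin t, (i : ℕ) * (w.1 i : ℕ)) ≤ t ∧
            ∀ i : Fin t, (w.2 i).card ≤ t / 2 ^ (i : ℕ) + (w.1 i : ℕ)} → Σ b : B, Fib b :=
    fun w => ⟨⟨w.1.1, w.2.1⟩, fun i => ⟨w.1.2 i, w.2.2 i⟩⟩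
  have hf : Function.Injective f := by
    rintro ⟨⟨b1, s1⟩, hc1, hd1⟩ ⟨⟨b2, s2⟩, hc2, hd2⟩ h
    simp only [f, Sigma.mk.inj_iff, Subtype.mk.injEq] at h
    obtain ⟨hb, hs⟩ := h
    rw [Subtype.mk.injEq] at hb
    subst hb
    rw [heq_iff_eq] at hs
    have hss : s1 = s2 := by
      funext i
      have := congrFun hs i
      simpa using this
    subst hss
    rfl
  calc Fintype.card
          {w : (Fin t → Fin (t + 1)) × ((i : Fin t) → Finset (Fin (t * 2 ^ (i : ℕ)))) //
            (∑ i : Fin t, (i : ℕ) * (w.1 i : ℕ)) ≤ t ∧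
            ∀ i : Fin t, (w.2 i).card ≤ t / 2 ^ (i : ℕ) + (w.1 i : ℕ)}
      ≤ Fintype.card (Σ b : B, Fib b) := Fintype.card_le_of_injective f hf
  _ = ∑ b : B, Fintype.card (Fib b) := Fintype.card_sigma
  _ ≤ ∑ _b : B, 2 ^ (22 * t) := by
      apply Finset.sum_le_sum
      intro b _
      calc Fintype.card (Fib b)
          = ∏ i : Fin t,
              Fintype.card {s : Finset (Fin (t * 2 ^ (i : ℕ))) //
                s.card ≤ t / 2 ^ (i : ℕ) + (b.1 i : ℕ)} := Fintype.card_pi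
        _ ≤ ∏ i : Fin t, 2 ^ ((2 * (i : ℕ) + 4) * (t / 2 ^ (i : ℕ) + (b.1 i : ℕ))) := by
            apply Finset.prod_le_prod'
            intro i _
            exact card_small_subsets t (i : ℕ) (b.1 i : ℕ)
        _ = 2 ^ (∑ i : Fin t, (2 * (i : ℕ) + 4) * (t / 2 ^ (i : ℕ) + (b.1 i : ℕ))) :=
            Finset.prod_pow_eq_pow_sum _ _ _
        _ ≤ 2 ^ (22 * t) :=
            Nat.pow_le_pow_right (by norm_num) (exponent_bound t ht b.1 b.2)
  _ = Fintype.card B * 2 ^ (22 * t) := by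
      rw [Finset.sum_const, Finset.card_univ, smul_eq_mul]
  _ ≤ 2 ^ (4 * t) * 2 ^ (22 * t) :=
      Nat.mul_le_mul_right _ (card_B_le t ht)
  _ = 2 ^ (26 * t) := by rw [← pow_add]; congr 1; ring
end

section
/- (Counting k-plausible offset patterns.) Given at most 5k unmatched blocks, the number of ways to choose which unmatched blocks get matched and to assign offsets delta_1,...,delta_m (signed integers) to the matched ones such that the sum of absolute offset differences |delta_1| + sum_{j} |delta_{j+1} - delta_j| + |delta_m| is at most k, is at most 2^{Ck} for an absolute constant C. -/
open Finset

private def diffSeq (δ : ℕ → ℤ) : ℕ → ℤ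
  | 0 => δ 0
  | (i+1) => δ (i+1) - δ i

private lemma tele (δ : ℕ → ℤ) (n : ℕ) :
    (∑ i ∈ Finset.range (n+1), diffSeq δ i) = δ n := by
  induction n with
  | zero => simp [diffSeq]
  | succ n ih => rw [Finset.sum_range_succ, ih, diffSeq]; ring

private lemma sign_abs_eq {a b : ℤ} (h1 : a.natAbs = b.natAbs)
    (h2 : decide (0 ≤ a) = decide (0 ≤ b)) : a = b := by
  simp only [decide_eq_decide] at h2; omega

private lemma image_inj {n N : ℕ} (f g : Fin n → Fin N) (hf : StrictMono f) (hg : StrictMono g)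
    (h : Finset.image f Finset.univ = Finset.image g Finset.univ) : f = g := by
  have hcard : (Finset.image f Finset.univ).card = n := by
    rw [Finset.card_image_of_injective _ hf.injective, Finset.card_univ, Fintype.card_fin]
  have h1 := Finset.orderEmbOfFin_unique hcard
    (fun x => Finset.mem_image_of_mem f (Finset.mem_univ x)) hf
  have h2 := Finset.orderEmbOfFin_unique hcard
    (fun x => h ▸ Finset.mem_image_of_mem g (Finset.mem_univ x)) hg
  rw [show f = fun x => f x from rfl, h1, h2]

private lemma sumBound (k : ℕ) (S : Finset (Fin (5*k))) (δ : ℕ → ℤ)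
    (h0 : ∀ j, S.card ≤ j → δ j = 0)
    (hTV : (δ 0).natAbs + (∑ j ∈ range (S.card - 1), (δ (j+1) - δ j).natAbs)
      + (δ (S.card-1)).natAbs ≤ k) :
    ∑ j ∈ range (5*k+1), (diffSeq δ j).natAbs ≤ k := by
  have hm : S.card ≤ 5*k := le_trans (Finset.card_le_univ S) (by simp)
  rcases Nat.eq_zero_or_eq_succ_pred S.card with hc | hc
  · have : ∀ j, diffSeq δ j = 0 := by
      intro j
      cases j with
      | zero => simpa [diffSeq] using h0 0 (by omega)
      | succ i => simp [diffSeq, h0 (i+1) (by omega), h0 i (by omega)]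
    simp [this]
  · set c := S.card - 1 with hcdef
    have hcard : S.card = c + 1 := hc
    have hsub : ∑ j ∈ range (5*k+1), (diffSeq δ j).natAbs
        = ∑ j ∈ range (S.card + 1), (diffSeq δ j).natAbs := by
      refine (Finset.sum_subset (Finset.range_subset_range.2 (by omega)) ?_).symm
      intro x _ hx
      rw [Finset.mem_range, not_lt] at hx
      have hx1 : 1 ≤ x := by omega
      obtain ⟨i, rfl⟩ : ∃ i, x = i + 1 := ⟨x - 1, by omega⟩
      simp [diffSeq, h0 (i+1) (by omega), h0 i (by omega)]
    rw [hsub, Finset.sum_range_succ']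
    simp only [diffSeq]
    rw [hcard, Finset.sum_range_succ]
    have hend : δ (c+1) = 0 := h0 _ (by omega)
    have : (δ (c+1) - δ c).natAbs = (δ c).natAbs := by rw [hend]; omega
    rw [this]
    omega

/-- Counting `k`-plausible offset patterns.  A pattern consists of a subset `S` of the
at most `5k` unmatched blocks (those that get matched) together with a sequence of
integer offsets `δ_0, …, δ_{|S|-1}` assigned to the matched blocks (encoded as a
function `ℕ → ℤ` vanishing from position `|S|` on) whose total variation
`|δ_0| + ∑_j |δ_{j+1} - δ_j| + |δ_{|S|-1}|` is at most `k`.  The number of such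
patterns is at most `2^{C·k}` for an absolute constant `C`. -/
theorem stmt13 :
    ∃ C : ℕ, ∀ k : ℕ, 1 ≤ k →
      Set.ncard
          {p : Finset (Fin (5 * k)) × (ℕ → ℤ) |
            (∀ j : ℕ, p.1.card ≤ j → p.2 j = 0) ∧
            (p.2 0).natAbs
              + (∑ j ∈ Finset.range (p.1.card - 1), (p.2 (j + 1) - p.2 j).natAbs)
              + (p.2 (p.1.card - 1)).natAbs ≤ k}
        ≤ 2 ^ (C * k) := by
  refine ⟨19, fun k hk => ?_⟩
  rw [← Nat.card_coe_set_eq]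
  set A := {p : Finset (Fin (5 * k)) × (ℕ → ℤ) |
            (∀ j : ℕ, p.1.card ≤ j → p.2 j = 0) ∧
            (p.2 0).natAbs
              + (∑ j ∈ Finset.range (p.1.card - 1), (p.2 (j + 1) - p.2 j).natAbs)
              + (p.2 (p.1.card - 1)).natAbs ≤ k} with hA
  -- bound on partial sums
  have hb : ∀ p : A, ∀ i : Fin (5*k+2),
      (i : ℕ) + ∑ j ∈ range (i : ℕ), (diffSeq p.1.2 j).natAbs < 6*k+2 := by
    intro p i
    have htot := sumBound k p.1.1 p.1.2 p.2.1 p.2.2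
    have hpart : ∑ j ∈ range (i : ℕ), (diffSeq p.1.2 j).natAbs ≤ k := by
      refine le_trans (Finset.sum_le_sum_of_subset (Finset.range_subset_range.2 ?_)) htot
      omega
    have := i.2
    omega
  have key : Nat.card A ≤ Nat.card (Finset (Fin (5*k)) × (Fin (5*k+1) → Bool) × Finset (Fin (6*k+2))) := by
    apply Nat.card_le_card_of_injective
      (f := fun p : A => (p.1.1,
        fun i : Fin (5*k+1) => decide (0 ≤ diffSeq p.1.2 (i : ℕ)),
        Finset.image (fun i : Fin (5*k+2) =>
          (⟨(i : ℕ) + ∑ j ∈ range (i : ℕ), (diffSeq p.1.2 j).natAbs, hb p i⟩ : Fin (6*k+2)))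
          Finset.univ))
    intro p q hpq
    simp only [Prod.mk.injEq] at hpq
    obtain ⟨h1, h2, h3⟩ := hpq
    have hmono : ∀ r : A, StrictMono (fun i : Fin (5*k+2) =>
        (⟨(i : ℕ) + ∑ j ∈ range (i : ℕ), (diffSeq r.1.2 j).natAbs, hb r i⟩ : Fin (6*k+2))) := by
      intro r a b hab
      have : (a : ℕ) < (b : ℕ) := hab
      have hmono2 : ∑ j ∈ range (a : ℕ), (diffSeq r.1.2 j).natAbs
          ≤ ∑ j ∈ range (b : ℕ), (diffSeq r.1.2 j).natAbs :=
        Finset.sum_le_sum_of_subset (Finset.range_subset_range.2 this.le)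
      simp only [Fin.mk_lt_mk]
      omega
    have hψ := image_inj _ _ (hmono p) (hmono q) h3
    have hSum : ∀ i, i ≤ 5*k+1 → ∑ j ∈ range i, (diffSeq p.1.2 j).natAbs
        = ∑ j ∈ range i, (diffSeq q.1.2 j).natAbs := by
      intro i hi
      have := congrFun hψ ⟨i, by omega⟩
      simp only [Fin.mk.injEq] at this
      omega
    have hf : ∀ i, i ≤ 5*k → (diffSeq p.1.2 i).natAbs = (diffSeq q.1.2 i).natAbs := by
      intro i hi
      have e1 := hSum i (by omega)
      have e2 := hSum (i+1) (by omega)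
      rw [Finset.sum_range_succ, Finset.sum_range_succ] at e2
      omega
    have he : ∀ i, i ≤ 5*k → diffSeq p.1.2 i = diffSeq q.1.2 i := by
      intro i hi
      exact sign_abs_eq (hf i hi) (congrFun h2 ⟨i, by omega⟩)
    have hδ : p.1.2 = q.1.2 := by
      funext j
      rcases le_or_gt j (5*k) with hj | hj
      · rw [← tele p.1.2 j, ← tele q.1.2 j]
        exact Finset.sum_congr rfl fun i hi => he i (by
          rw [Finset.mem_range] at hi; omega)
      · have hcp : p.1.1.card ≤ j :=
          le_trans (le_trans (Finset.card_le_univ _) (by simp)) hj.le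
        have hcq : q.1.1.card ≤ j :=
          le_trans (le_trans (Finset.card_le_univ _) (by simp)) hj.le
        rw [p.2.1 j hcp, q.2.1 j hcq]
    exact Subtype.ext (Prod.ext h1 hδ)
  refine le_trans key ?_
  have : Nat.card (Finset (Fin (5*k)) × (Fin (5*k+1) → Bool) × Finset (Fin (6*k+2)))
      = 2^(5*k) * (2^(5*k+1) * 2^(6*k+2)) := by
    simp [Nat.card_eq_fintype_card, Fintype.card_finset, Fintype.card_fun]
  rw [this, ← pow_add, ← pow_add]
  exact Nat.pow_le_pow_right (by norm_num) (by omega)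
end

section
/- (Summary-to-code reduction.) Suppose there exists a deterministic document exchange scheme: a summary map S: Sigma^n -> {0,1}^s and a decoder Rec such that for all F, F' with ED(F,F') <= 2k, Rec(F', S(F)) = F. Suppose further there exists an efficient insdel block code E encoding s-bit strings into codewords of length r = O(s/log|Sigma| + k) over Sigma that corrects 2k insdel errors. Then the map C(X) = X concatenated with E(S(X)) is a code of length n + r correcting k adversarial insertions and deletions: for any X and any C' with ED(C', C(X)) <= k, X can be recovered from C'. -/
/-- Costs of edit operations (Mathlib's former `Levenshtein.Cost`). -/
structure Levenshtein.Cost (α β δ : Type*) where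
  delete : α → δ
  insert : β → δ
  substitute : α → β → δ

/-- Unit costs (Mathlib's former `Levenshtein.defaultCost`). -/
def Levenshtein.defaultCost {α : Type*} [DecidableEq α] : Levenshtein.Cost α α ℕ where
  delete _ := 1
  insert _ := 1
  substitute a b := if a = b then 0 else 1

/-- Levenshtein distance, by the recurrence Mathlib's former `levenshtein` satisfied. -/
def levenshtein {α β δ : Type*} [AddZeroClass δ] [Min δ] (C : Levenshtein.Cost α β δ) :
    List α → List β → δ
  | [], [] => 0
  | [], y :: ys => C.insert y + levenshtein C [] ys
  | x :: xs, [] => C.delete x + levenshtein C xs []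
  | x :: xs, y :: ys =>
    min (C.delete x + levenshtein C xs (y :: ys))
      (min (C.insert y + levenshtein C (x :: xs) ys) (C.substitute x y + levenshtein C xs ys))

/-- Edit distance (Levenshtein distance with unit costs). -/
def ED {α : Type*} [DecidableEq α] (F F' : List α) : ℕ :=
  levenshtein Levenshtein.defaultCost F F'

section LevAux
variable {α β δ : Type*} [AddZeroClass δ] [Min δ] (C : Levenshtein.Cost α β δ)

@[simp] theorem levenshtein_nil_nil : levenshtein C [] [] = 0 := by simp only [levenshtein]

@[simp] theorem levenshtein_nil_cons (y : β) (ys : List β) :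
    levenshtein C [] (y :: ys) = C.insert y + levenshtein C [] ys := by simp only [levenshtein]

@[simp] theorem levenshtein_cons_nil (x : α) (xs : List α) :
    levenshtein C (x :: xs) [] = C.delete x + levenshtein C xs [] := by simp only [levenshtein]

theorem levenshtein_cons_cons (x : α) (xs : List α) (y : β) (ys : List β) :
    levenshtein C (x :: xs) (y :: ys) =
      min (C.delete x + levenshtein C xs (y :: ys))
        (min (C.insert y + levenshtein C (x :: xs) ys)
          (C.substitute x y + levenshtein C xs ys)) := by simp only [levenshtein]

end LevAux

@[simp] theorem Levenshtein.defaultCost_delete {α : Type*} [DecidableEq α] (a : α) :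
    (Levenshtein.defaultCost : Levenshtein.Cost α α ℕ).delete a = 1 := rfl

@[simp] theorem Levenshtein.defaultCost_insert {α : Type*} [DecidableEq α] (a : α) :
    (Levenshtein.defaultCost : Levenshtein.Cost α α ℕ).insert a = 1 := rfl

@[simp] theorem Levenshtein.defaultCost_substitute {α : Type*} [DecidableEq α] (a b : α) :
    (Levenshtein.defaultCost : Levenshtein.Cost α α ℕ).substitute a b = if a = b then 0 else 1 := rfl


namespace Stmt15Aux

variable {α : Type*} [DecidableEq α]

lemma ED_nil_left (l : List α) : ED ([] : List α) l = l.length := by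
  induction l with
  | nil => simp [ED]
  | cons y t ih => simp only [ED] at ih ⊢; simp [ih]; omega

lemma ED_nil_right (l : List α) : ED l ([] : List α) = l.length := by
  induction l with
  | nil => simp [ED]
  | cons y t ih => simp only [ED] at ih ⊢; simp [ih]; omega

lemma ED_length (l₁ l₂ : List α) :
    l₂.length ≤ l₁.length + ED l₁ l₂ ∧ l₁.length ≤ l₂.length + ED l₁ l₂ := by
  match l₁, l₂ with
  | [], l₂ => simp [ED_nil_left]
  | x::xs, [] => simp [ED_nil_right]
  | x::xs, y::ys =>
    have h1 := ED_length xs (y::ys)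
    have h2 := ED_length (x::xs) ys
    have h3 := ED_length xs ys
    simp only [ED, levenshtein_cons_cons, Levenshtein.defaultCost_delete,
      Levenshtein.defaultCost_insert, Levenshtein.defaultCost_substitute,
      List.length_cons] at *
    split_ifs at * <;> omega
termination_by l₁.length + l₂.length

lemma ED_del (x : α) (xs w : List α) : ED (x::xs) w ≤ 1 + ED xs w := by
  cases w with
  | nil => simp only [ED_nil_right, List.length_cons]; omega
  | cons y ys =>
    simp only [ED, levenshtein_cons_cons, Levenshtein.defaultCost_delete]
    exact min_le_left _ _

lemma ED_ins (u : List α) (y : α) (w : List α) : ED u (y::w) ≤ 1 + ED u w := by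
  cases u with
  | nil => simp only [ED_nil_left, List.length_cons]; omega
  | cons x xs =>
    simp only [ED, levenshtein_cons_cons, Levenshtein.defaultCost_insert]
    exact le_trans (min_le_right _ _) (le_trans (min_le_left _ _) le_rfl)

lemma ED_dropHead (u : List α) (y : α) (w : List α) : ED u w ≤ 1 + ED u (y::w) := by
  induction u with
  | nil => simp only [ED_nil_left, List.length_cons]; omega
  | cons x xs ih =>
    have hdel : ED (x::xs) w ≤ 1 + ED xs w := ED_del x xs w
    conv_rhs => rw [show ED (x::xs) (y::w) =
      min (1 + ED xs (y::w)) (min (1 + ED (x::xs) w)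
        ((if x = y then 0 else 1) + ED xs w)) by
        simp [ED, levenshtein_cons_cons]]
    split_ifs <;> omega

lemma ED_prepend (u a w : List α) : ED u (a ++ w) ≤ a.length + ED u w := by
  induction a with
  | nil => simp
  | cons y t ih =>
    have := ED_ins u y (t ++ w)
    simpa using le_trans this (by omega)

lemma ED_drop (u : List α) (j : ℕ) (l : List α) : ED u (l.drop j) ≤ j + ED u l := by
  induction j generalizing l with
  | zero => simp
  | succ j ih =>
    cases l with
    | nil => simp
    | cons y t =>
      have h1 := ih t
      have h2 := ED_dropHead u y t
      simpa using by omega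

lemma ED_le_lengths (a b : List α) : ED a b ≤ a.length + b.length := by
  induction a generalizing b with
  | nil => simp [ED_nil_left]
  | cons x xs ih =>
    cases b with
    | nil => simp [ED_nil_right]
    | cons y ys =>
      have h := ih (y::ys)
      calc ED (x::xs) (y::ys) ≤ 1 + ED xs (y::ys) := ED_del x xs (y::ys)
        _ ≤ (x::xs).length + (y::ys).length := by simp at h ⊢; omega

lemma ED_append (u w z : List α) : ED u (w ++ z) ≤ ED u w + z.length := by
  match u, w with
  | [], w => simp [ED_nil_left]
  | x::xs, [] =>
    have := ED_le_lengths (x::xs) z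
    simp [ED_nil_right] at this ⊢; omega
  | x::xs, y::ys =>
    have h1 := ED_append xs (y::ys) z
    have h2 := ED_append (x::xs) ys z
    have h3 := ED_append xs ys z
    simp only [ED, List.cons_append, levenshtein_cons_cons,
      Levenshtein.defaultCost_delete, Levenshtein.defaultCost_insert,
      Levenshtein.defaultCost_substitute] at *
    split_ifs at * <;> omega
termination_by u.length + w.length

lemma ED_take (u : List α) (l : List α) (d : ℕ) :
    ED u (l.take d) ≤ ED u l + (l.length - d) := by
  match u, l with
  | [], l =>
    have : (l.take d).length = min d l.length := by simp
    simp only [ED_nil_left, this]; omega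
  | x::xs, [] => simp
  | x::xs, y::ys =>
    cases d with
    | zero =>
      have := (ED_length (x::xs) (y::ys)).2
      simp only [List.take_zero, ED_nil_right, List.length_cons] at *
      omega
    | succ e =>
      have h1 := ED_take xs (y::ys) (e+1)
      have h2 := ED_take (x::xs) ys e
      have h3 := ED_take xs ys e
      simp only [List.take_succ_cons, ED, levenshtein_cons_cons,
        Levenshtein.defaultCost_delete, Levenshtein.defaultCost_insert,
        Levenshtein.defaultCost_substitute, List.length_cons] at *
      split_ifs at * <;> omega
termination_by u.length + l.length

lemma ED_split (u v w : List α) :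
    ∃ w₁ w₂ : List α, w = w₁ ++ w₂ ∧ ED u w₁ + ED v w₂ ≤ ED (u ++ v) w := by
  match u, w with
  | [], w =>
    refine ⟨[], w, rfl, ?_⟩
    simp [ED_nil_right]
  | x::xs, [] =>
    refine ⟨[], [], rfl, ?_⟩
    simp only [ED_nil_right, List.append_nil, List.length_append, List.length_cons]
    omega
  | x::xs, y::ys =>
    have hM : ED ((x::xs) ++ v) (y::ys) =
        min (1 + ED (xs ++ v) (y::ys)) (min (1 + ED ((x::xs) ++ v) ys)
          ((if x = y then 0 else 1) + ED (xs ++ v) ys)) := by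
      simp [ED, levenshtein_cons_cons]
    have h3way : ED ((x::xs) ++ v) (y::ys) = 1 + ED (xs ++ v) (y::ys) ∨
        ED ((x::xs) ++ v) (y::ys) = 1 + ED ((x::xs) ++ v) ys ∨
        ED ((x::xs) ++ v) (y::ys) = (if x = y then 0 else 1) + ED (xs ++ v) ys := by
      split_ifs at * <;> omega
    rcases h3way with h | h | h
    · obtain ⟨w₁, w₂, hw, hle⟩ := ED_split xs v (y::ys)
      refine ⟨w₁, w₂, hw, ?_⟩
      have := ED_del x xs w₁
      omega
    · obtain ⟨w₁, w₂, hw, hle⟩ := ED_split (x::xs) v ys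
      refine ⟨y :: w₁, w₂, by simp [hw], ?_⟩
      have := ED_ins (x::xs) y w₁
      omega
    · obtain ⟨w₁, w₂, hw, hle⟩ := ED_split xs v ys
      refine ⟨y :: w₁, w₂, by simp [hw], ?_⟩
      have hsub : ED (x::xs) (y::w₁) ≤ (if x = y then 0 else 1) + ED xs w₁ := by
        simp only [ED, levenshtein_cons_cons, Levenshtein.defaultCost_substitute]
        exact le_trans (min_le_right _ _) (min_le_right _ _)
      split_ifs at * <;> omega
termination_by u.length + w.length

end Stmt15Aux

open Stmt15Aux in
/-- Summary-to-code reduction.  Given a deterministic document exchange scheme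
(`Smap`, `Rec`) for edit distance `2k` on length-`n` files, and a block code `E`
(with decoder `DE`) of codeword length `r` correcting `2k` insdel errors, the
concatenated code `C(X) = X ++ E(Smap X)` corrects `k` adversarial insertions and
deletions: from any `C'` with `ED(C', C(X)) ≤ k` one can recover `X`. -/
theorem stmt15 {σ : Type*} [DecidableEq σ] (n k : ℕ)
    (Smap : List σ → List Bool) (Rec : List σ → List Bool → List σ)
    (hRec : ∀ F F' : List σ, F.length = n → ED F F' ≤ 2 * k →
      Rec F' (Smap F) = F)
    (E : List Bool → List σ) (DE : List σ → List Bool) (r : ℕ)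
    (hElen : ∀ s, (E s).length = r)
    (hDE : ∀ (s : List Bool) (w : List σ), ED (E s) w ≤ 2 * k → DE w = s) :
    ∃ Dec : List σ → List σ, ∀ (X C' : List σ), X.length = n →
      ED (X ++ E (Smap X)) C' ≤ k → Dec C' = X := by
  refine ⟨fun C' => Rec (C'.take (C'.length - r)) (DE (C'.drop (C'.length - r))), ?_⟩
  intro X C' hX h
  obtain ⟨a, b, rfl, hsplit⟩ := ED_split X (E (Smap X)) C'
  have hsum : ED X a + ED (E (Smap X)) b ≤ k := le_trans hsplit h
  have hlb := ED_length (E (Smap X)) b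
  have hvr : (E (Smap X)).length = r := hElen _
  set d : ℕ := (a ++ b).length - r with hd
  have hdlen : d = a.length + b.length - r := by simp [hd]
  -- bound on the suffix part
  have h2 : ED (E (Smap X)) ((a ++ b).drop d) ≤ 2 * k := by
    rw [List.drop_append]
    have hp := ED_prepend (E (Smap X)) (a.drop d) (b.drop (d - a.length))
    have hq := ED_drop (E (Smap X)) (d - a.length) b
    have hlen : (a.drop d).length = a.length - d := by simp
    omega
  -- bound on the prefix part
  have h1 : ED X ((a ++ b).take d) ≤ 2 * k := by
    rw [List.take_append]
    have hp := ED_append X (a.take d) (b.take (d - a.length))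
    have hq := ED_take X a d
    have hl1 : (a.take d).length = min d a.length := by simp
    have hl2 : (b.take (d - a.length)).length = min (d - a.length) b.length := by simp
    omega
  simp only
  rw [hDE (Smap X) _ h2, hRec X _ hX h1]
end
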